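/- Let r_c > 0 and 0 < R ≤ r_c, let p ∈ ℝ² with ‖p‖ = R, and let X be uniformly distributed on the closed disk of radius r_c centered at the origin. Then: (i) for every t with 0 ≤ t ≤ r_c − R, the probability that ‖X − p‖ ≤ t equals t²/r_c²; and (ii) for every t with r_c − R ≤ t ≤ R + r_c, the probability that ‖X − p‖ ≤ t equals (r_c − R)²/r_c² + ∫_{r_c−R}^{t} (2r/(π r_c²)) · arccos((R² + r² − r_c²)/(2 R r)) dr. Equivalently, ‖X − p‖ has density 2r/r_c² on (0, r_c − R), density (2r/(π r_c²)) · arccos((R² + r² − r_c²)/(2 R r)) on (r_c − R, R + r_c), and density 0 elsewhere. (Paper's Lemma 1, case R_{c2u} ≤ r_c.) -/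

import Mathlib

/-!
Move `p` to the positive real axis of `ℂ` by a linear isometry and integrate in polar coordinates
centred at `p`. By the law of cosines, the circle of radius `r` about `p` meets the disk of radius
`r_c` in the arc of angles `θ` with `cos θ ≤ (r_c² - R² - r²) / (2 R r)`, of length
`2 r arccos ((R² + r² - r_c²) / (2 R r))`; for `r ≤ r_c - R` this is the whole circle. So the area
of `closedBall p t ∩ closedBall 0 r_c` is the integral of that arc length over `(0, t]`, and
dividing by `π r_c²` gives both formulas.
-/

open MeasureTheory Real Set Metric

lemma arccos_le_iff_cos_le {x c : ℝ} (hx₀ : 0 ≤ x) (hxπ : x < π) :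
    arccos c ≤ x ↔ cos x ≤ c := by
  constructor
  · intro h
    by_contra! hc
    rcases lt_or_ge c (-1) with hc₁ | hc₁
    · rw [arccos_of_le_neg_one hc₁.le] at h
      exact hxπ.not_ge h
    · have := arccos_lt_arccos hc₁ hc (cos_le_one x)
      rw [arccos_cos hx₀ hxπ.le] at this
      exact this.not_ge h
  · intro h
    simpa [arccos_cos hx₀ hxπ.le] using arccos_le_arccos h

lemma sep_Ioo_cos_le_eq_diff (c : ℝ) :
    {θ ∈ Ioo (-π) π | cos θ ≤ c} = Ioo (-π) π \ Ioo (-arccos c) (arccos c) := by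
  ext θ
  simp only [mem_sep_iff, mem_sdiff, and_congr_right_iff]
  intro hθ
  rw [← cos_abs, ← arccos_le_iff_cos_le (abs_nonneg θ) (abs_lt.2 hθ), ← not_lt, mem_Ioo,
    abs_lt]

lemma volume_sep_Ioo_cos_le (c : ℝ) :
    volume {θ ∈ Ioo (-π) π | cos θ ≤ c} = ENNReal.ofReal (2 * arccos (-c)) := by
  have hsub : Ioo (-arccos c) (arccos c) ⊆ Ioo (-π) π :=
    Ioo_subset_Ioo (neg_le_neg (arccos_le_pi c)) (arccos_le_pi c)
  rw [sep_Ioo_cos_le_eq_diff, measure_sdiff hsub measurableSet_Ioo.nullMeasurableSet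
      measure_Ioo_lt_top.ne, volume_Ioo, volume_Ioo,
    ← ENNReal.ofReal_sub _ (by linarith [arccos_nonneg c]), arccos_neg]
  ring_nf

theorem Complex.volume_eq_lintegral_polar {S : Set ℂ} (hS : MeasurableSet S) :
    volume S = ∫⁻ r in Ioi 0,
      ENNReal.ofReal r * volume {θ ∈ Ioo (-π) π | Complex.polarCoord.symm (r, θ) ∈ S} := by
  have hmeas : Measurable Complex.polarCoord.symm :=
    measurableEquivRealProd.symm.measurable.comp continuous_polarCoord_symm.measurable
  rw [← lintegral_indicator_one hS, ← Complex.lintegral_comp_polarCoord_symm,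
    polarCoord_target, Measure.volume_eq_prod, ← Measure.prod_restrict,
    lintegral_prod _ (by fun_prop)]
  refine setLIntegral_congr_fun measurableSet_Ioi fun r _ ↦ ?_
  have hslice : MeasurableSet ((fun θ ↦ Complex.polarCoord.symm (r, θ)) ⁻¹' S) :=
    hmeas.comp measurable_prodMk_left hS
  simp_rw [smul_eq_mul, ← indicator_comp_right (fun θ ↦ Complex.polarCoord.symm (r, θ)),
    Pi.one_comp]
  rw [lintegral_const_mul _ (measurable_one.indicator hslice), lintegral_indicator_one hslice,
    Measure.restrict_apply hslice, inter_comm]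
  rfl

lemma Complex.norm_polarCoord_symm_add_sq (r θ a : ℝ) :
    ‖Complex.polarCoord.symm (r, θ) + (a : ℂ)‖ ^ 2 = r ^ 2 + 2 * a * r * Real.cos θ + a ^ 2 := by
  simp only [Complex.sq_norm, Complex.normSq_apply, Complex.polarCoord_symm_apply,
    Complex.add_re, Complex.add_im, Complex.mul_re, Complex.mul_im, Complex.ofReal_re,
    Complex.ofReal_im, Complex.I_re, Complex.I_im]
  linear_combination r ^ 2 * Real.sin_sq_add_cos_sq θ

lemma Complex.volume_sep_Ioo_polarCoord_symm_add_mem_closedBall {R r_c r : ℝ} (hR : 0 < R)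
    (hr_c : 0 ≤ r_c) (hr : 0 < r) :
    volume {θ ∈ Ioo (-π) π | Complex.polarCoord.symm (r, θ) + (R : ℂ) ∈ closedBall 0 r_c} =
      ENNReal.ofReal (2 * arccos ((R ^ 2 + r ^ 2 - r_c ^ 2) / (2 * R * r))) := by
  have hslice : ∀ θ, Complex.polarCoord.symm (r, θ) + (R : ℂ) ∈ closedBall 0 r_c ↔
      Real.cos θ ≤ (r_c ^ 2 - R ^ 2 - r ^ 2) / (2 * R * r) := fun θ ↦ by
    rw [mem_closedBall_zero_iff, ← pow_le_pow_iff_left₀ (norm_nonneg _) hr_c two_ne_zero,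
      Complex.norm_polarCoord_symm_add_sq, le_div_iff₀ (by positivity)]
    constructor <;> intro h <;> linarith
  simp_rw [hslice, volume_sep_Ioo_cos_le, ← neg_div]
  ring_nf

/-- The length of the arc of the circle of radius `r` about a point at distance `R` from the
centre of a disk of radius `r_c` that lies inside the disk. -/
noncomputable def arcLengthInDisk (R r_c r : ℝ) : ℝ :=
  2 * r * arccos ((R ^ 2 + r ^ 2 - r_c ^ 2) / (2 * R * r))

lemma arcLengthInDisk_nonneg (R r_c : ℝ) {r : ℝ} (hr : 0 ≤ r) : 0 ≤ arcLengthInDisk R r_c r :=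
  mul_nonneg (by positivity) (arccos_nonneg _)

lemma arcLengthInDisk_of_le_sub {R r_c r : ℝ} (hR : 0 < R) (hr : 0 ≤ r) (h : r ≤ r_c - R) :
    arcLengthInDisk R r_c r = 2 * π * r := by
  rcases hr.eq_or_lt with rfl | hr
  · simp [arcLengthInDisk]
  · have : (R ^ 2 + r ^ 2 - r_c ^ 2) / (2 * R * r) ≤ -1 := by
      rw [div_le_iff₀ (by positivity)]
      nlinarith
    rw [arcLengthInDisk, arccos_of_le_neg_one this]
    ring

lemma intervalIntegrable_arcLengthInDisk (R r_c a b : ℝ) :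
    IntervalIntegrable (arcLengthInDisk R r_c) volume a b := by
  refine IntegrableOn.intervalIntegrable ?_
  refine (continuous_const.mul continuous_id).integrableOn_Icc.mul_bdd (c := π) ?_ ?_
  · exact (continuous_arccos.measurable.comp (by fun_prop)).aestronglyMeasurable
  · refine ae_of_all _ fun r ↦ ?_
    rw [norm_of_nonneg (arccos_nonneg _)]
    exact arccos_le_pi _

lemma integral_arcLengthInDisk_of_le_sub {R r_c s : ℝ} (hR : 0 < R) (hs : 0 ≤ s)
    (h : s ≤ r_c - R) : ∫ r in 0..s, arcLengthInDisk R r_c r = π * s ^ 2 := by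
  rw [intervalIntegral.integral_congr (g := fun r ↦ 2 * π * r),
    intervalIntegral.integral_const_mul, integral_id]
  · ring
  · intro r hr
    rw [uIcc_of_le hs] at hr
    exact arcLengthInDisk_of_le_sub hR hr.1 (hr.2.trans h)

theorem Complex.volume_closedBall_inter_closedBall_zero {R r_c : ℝ} (hR : 0 < R) (hr_c : 0 ≤ r_c)
    (t : ℝ) :
    volume (closedBall (R : ℂ) t ∩ closedBall 0 r_c) =
      ∫⁻ r in Ioc 0 t, ENNReal.ofReal (arcLengthInDisk R r_c r) := by
  have hS : MeasurableSet ((· + (R : ℂ)) ⁻¹' (closedBall (R : ℂ) t ∩ closedBall 0 r_c)) :=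
    (measurableSet_closedBall.inter measurableSet_closedBall).preimage (measurable_add_const _)
  rw [← measure_preimage_add_right volume (R : ℂ), Complex.volume_eq_lintegral_polar hS,
    ← inter_eq_left.2 (Ioc_subset_Ioi_self : Ioc (0 : ℝ) t ⊆ Ioi 0),
    ← setLIntegral_indicator measurableSet_Ioc]
  refine setLIntegral_congr_fun measurableSet_Ioi fun r (hr : 0 < r) ↦ ?_
  have hmem : ∀ θ, Complex.polarCoord.symm (r, θ) ∈
      (· + (R : ℂ)) ⁻¹' (closedBall (R : ℂ) t ∩ closedBall 0 r_c) ↔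
      r ≤ t ∧ Complex.polarCoord.symm (r, θ) + (R : ℂ) ∈ closedBall 0 r_c := fun θ ↦ by
    rw [mem_preimage, mem_inter_iff, mem_closedBall, dist_eq_norm, add_sub_cancel_right,
      Complex.norm_polarCoord_symm, abs_of_pos hr]
  simp_rw [hmem]
  by_cases hrt : r ≤ t
  · simp only [hrt, true_and]
    rw [indicator_of_mem (show r ∈ Ioc 0 t from ⟨hr, hrt⟩),
      Complex.volume_sep_Ioo_polarCoord_symm_add_mem_closedBall hR hr_c hr,
      ← ENNReal.ofReal_mul hr.le, arcLengthInDisk]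
    ring_nf
  · simp [hrt]

lemma exists_linearIsometryEquiv_complex_apply_eq_norm (p : EuclideanSpace ℝ (Fin 2)) :
    ∃ g : EuclideanSpace ℝ (Fin 2) ≃ₗᵢ[ℝ] ℂ, g p = ‖p‖ := by
  let e := Complex.orthonormalBasisOneI.repr.symm
  refine ⟨e.trans (Submodule.reflection (ℝ ∙ (e p - ‖p‖))ᗮ), Submodule.reflection_sub ?_⟩
  rw [e.norm_map, Complex.norm_real, norm_norm]

theorem EuclideanSpace.volume_closedBall_inter_closedBall_zero {p : EuclideanSpace ℝ (Fin 2)}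
    {r_c : ℝ} (hp : 0 < ‖p‖) (hr_c : 0 ≤ r_c) {t : ℝ} (ht : 0 ≤ t) :
    volume (closedBall p t ∩ closedBall 0 r_c) =
      ENNReal.ofReal (∫ r in 0..t, arcLengthInDisk ‖p‖ r_c r) := by
  obtain ⟨g, hg⟩ := exists_linearIsometryEquiv_complex_apply_eq_norm p
  have hpre : closedBall p t ∩ closedBall 0 r_c =
      g ⁻¹' (closedBall (‖p‖ : ℂ) t ∩ closedBall 0 r_c) := by
    rw [preimage_inter, g.preimage_closedBall, g.preimage_closedBall, ← hg, g.symm_apply_apply,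
      map_zero]
  rw [hpre, g.measurePreserving.measure_preimage
      (measurableSet_closedBall.inter measurableSet_closedBall).nullMeasurableSet,
    Complex.volume_closedBall_inter_closedBall_zero hp hr_c, intervalIntegral.integral_of_le ht,
    ofReal_integral_eq_lintegral_ofReal ((intervalIntegrable_iff_integrableOn_Ioc_of_le ht).1
      (intervalIntegrable_arcLengthInDisk _ _ _ _))]
  exact ae_restrict_of_forall_mem measurableSet_Ioc fun r hr ↦ arcLengthInDisk_nonneg _ _ hr.1.le

theorem lemma1_case_R_le_rc_general (r_c R : ℝ) (hR0 : 0 < R) (hR : R ≤ r_c)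
    (p : EuclideanSpace ℝ (Fin 2)) (hp : ‖p‖ = R)
    (μ : Measure (EuclideanSpace ℝ (Fin 2)))
    (hμ : μ = (ENNReal.ofReal (π * r_c ^ 2))⁻¹ •
      (volume.restrict (Metric.closedBall (0 : EuclideanSpace ℝ (Fin 2)) r_c))) :
    (∀ t : ℝ, 0 ≤ t → t ≤ r_c - R →
      μ {x | ‖x - p‖ ≤ t} = ENNReal.ofReal (t ^ 2 / r_c ^ 2)) ∧
    (∀ t : ℝ, r_c - R ≤ t → t ≤ R + r_c →
      μ {x | ‖x - p‖ ≤ t} =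
        ENNReal.ofReal
          ((r_c - R) ^ 2 / r_c ^ 2 +
            ∫ r in (r_c - R)..t,
              (2 * r / (π * r_c ^ 2)) *
                Real.arccos ((R ^ 2 + r ^ 2 - r_c ^ 2) / (2 * R * r)))) := by
  have hrc : 0 < r_c := hR0.trans_le hR
  have hcdf : ∀ t, 0 ≤ t → μ {x | ‖x - p‖ ≤ t} =
      ENNReal.ofReal ((∫ r in 0..t, arcLengthInDisk R r_c r) / (π * r_c ^ 2)) := fun t ht ↦ by
    have hball : {x | ‖x - p‖ ≤ t} = closedBall p t := by ext; simp [dist_eq_norm]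
    rw [hμ, Measure.smul_apply, smul_eq_mul, Measure.restrict_apply' measurableSet_closedBall,
      hball, EuclideanSpace.volume_closedBall_inter_closedBall_zero (hp ▸ hR0) hrc.le ht, hp,
      ENNReal.ofReal_div_of_pos (by positivity), ENNReal.div_eq_inv_mul]
  have hdensity : ∀ r, 2 * r / (π * r_c ^ 2) * arccos ((R ^ 2 + r ^ 2 - r_c ^ 2) / (2 * R * r)) =
      arcLengthInDisk R r_c r / (π * r_c ^ 2) := fun r ↦ by
    rw [arcLengthInDisk]; ring
  refine ⟨fun t ht htR ↦ ?_, fun t htR _ ↦ ?_⟩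
  · rw [hcdf t ht, integral_arcLengthInDisk_of_le_sub hR0 ht htR, mul_div_mul_left _ _ pi_ne_zero]
  · have hs : 0 ≤ r_c - R := sub_nonneg.2 hR
    rw [hcdf t (hs.trans htR), ← intervalIntegral.integral_add_adjacent_intervals
        (intervalIntegrable_arcLengthInDisk R r_c 0 (r_c - R))
        (intervalIntegrable_arcLengthInDisk R r_c (r_c - R) t),
      integral_arcLengthInDisk_of_le_sub hR0 hs le_rfl, add_div, mul_div_mul_left _ _ pi_ne_zero]
    simp_rw [hdensity, intervalIntegral.integral_div]

/-- Paper's Lemma 1, case `R ≤ r_c`: for a point `X` uniformly distributed on the closed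
disk of radius `r_c` centered at the origin of `ℝ²`, and a point `p` at distance
`0 < R ≤ r_c` from the origin, (i) the CDF of `‖X - p‖` at `t ∈ [0, r_c - R]` is `t²/r_c²`,
and (ii) on `[r_c - R, R + r_c]` it is `(r_c - R)²/r_c²` plus the integral of the density
`(2r/(π r_c²)) · arccos((R² + r² − r_c²)/(2 R r))`. -/
theorem lemma1_case_R_le_rc (r_c R : ℝ) (hrc : 0 < r_c) (hR0 : 0 < R) (hR : R ≤ r_c)
    (p : EuclideanSpace ℝ (Fin 2)) (hp : ‖p‖ = R)
    (μ : Measure (EuclideanSpace ℝ (Fin 2)))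
    (hμ : μ = (ENNReal.ofReal (π * r_c ^ 2))⁻¹ •
      (volume.restrict (Metric.closedBall (0 : EuclideanSpace ℝ (Fin 2)) r_c))) :
    (∀ t : ℝ, 0 ≤ t → t ≤ r_c - R →
      μ {x | ‖x - p‖ ≤ t} = ENNReal.ofReal (t ^ 2 / r_c ^ 2)) ∧
    (∀ t : ℝ, r_c - R ≤ t → t ≤ R + r_c →
      μ {x | ‖x - p‖ ≤ t} =
        ENNReal.ofReal
          ((r_c - R) ^ 2 / r_c ^ 2 +
            ∫ r in (r_c - R)..t,
              (2 * r / (π * r_c ^ 2)) *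
                Real.arccos ((R ^ 2 + r ^ 2 - r_c ^ 2) / (2 * R * r)))) :=
  lemma1_case_R_le_rc_general r_c R hR0 hR p hp μ hμ
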